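/- arXiv:1912.03614 — 2 statements merged into one kernel-verified Lean document; each statement's English description precedes it below -/
import Mathlib

section
/- Let Q be a real symmetric k×k matrix and let h, e ∈ ℝ^k be vectors. Then Q + δ (h eᵀ + e hᵀ) < 0 holds for every scalar δ ∈ [-1,1] if and only if there exists a scalar ε > 0 such that Q + ε h hᵀ + ε⁻¹ e eᵀ < 0. -/
open Matrix

/-- A real matrix is negative definite: `xᵀ M x < 0` for every nonzero vector `x`. -/
def NegDef {ι : Type*} [Fintype ι] (M : Matrix ι ι ℝ) : Prop :=
  ∀ x : ι → ℝ, x ≠ 0 → x ⬝ᵥ M.mulVec x < 0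

/-!
As the condition is affine in `δ`, it reduces to `δ = ±1`, i.e. to
`2 |(h ⬝ᵥ x) (e ⬝ᵥ x)| < xᵀ P x` for `x ≠ 0`, where `P = -Q`; in particular `P` is positive
definite. In the inner product `⟪x, y⟫ = xᵀ P y` this reads `2 |⟪p, x⟫ ⟪q, x⟫| < ‖x‖²` with
`p = P⁻¹ h`, `q = P⁻¹ e`. Writing `p = a u`, `q = b v` with unit vectors `u, v`, both sides of the
equivalence are governed by the number `1 + |⟪u, v⟫|`: it bounds `⟪u, x⟫² + ⟪v, x⟫²` by
Cauchy–Schwarz applied to `⟪u, x⟫ u + ⟪v, x⟫ v`, and it is attained by `2 |⟪u, x⟫ ⟪v, x⟫|` at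
`x = u ± v`. Hence `a b (1 + |⟪u, v⟫|) < 1`, and `ε = b / a` works. The converse is AM–GM.
-/

open scoped RealInnerProductSpace

section InnerProductSpace

variable {E : Type*} [NormedAddCommGroup E] [InnerProductSpace ℝ E]

theorem inner_sq_add_inner_sq_le {u v : E} (hu : ‖u‖ = 1) (hv : ‖v‖ = 1) (x : E) :
    ⟪u, x⟫ ^ 2 + ⟪v, x⟫ ^ 2 ≤ (1 + |⟪u, v⟫|) * ‖x‖ ^ 2 := by
  set s := ⟪u, x⟫
  set t := ⟪v, x⟫
  set y := s • u + t • v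
  have hyx : ⟪y, x⟫ = s ^ 2 + t ^ 2 := by
    simp only [y, inner_add_left, real_inner_smul_left]
    ring
  have hyy : ‖y‖ ^ 2 ≤ (1 + |⟪u, v⟫|) * (s ^ 2 + t ^ 2) := by
    have hst : 2 * (s * t) * ⟪u, v⟫ ≤ (s ^ 2 + t ^ 2) * |⟪u, v⟫| :=
      calc 2 * (s * t) * ⟪u, v⟫ ≤ 2 * |s * t| * |⟪u, v⟫| := by
            linarith [le_abs_self (s * t * ⟪u, v⟫), abs_mul (s * t) ⟪u, v⟫]
        _ ≤ (s ^ 2 + t ^ 2) * |⟪u, v⟫| := by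
            gcongr
            rw [abs_mul, ← mul_assoc, ← sq_abs s, ← sq_abs t]
            exact two_mul_le_add_sq _ _
    rw [norm_add_sq_real, real_inner_smul_left, real_inner_smul_right, norm_smul, norm_smul, hu,
      hv, Real.norm_eq_abs, Real.norm_eq_abs]
    nlinarith [sq_abs s, sq_abs t]
  have hcs : (s ^ 2 + t ^ 2) ^ 2 ≤ (1 + |⟪u, v⟫|) * (s ^ 2 + t ^ 2) * ‖x‖ ^ 2 :=
    calc (s ^ 2 + t ^ 2) ^ 2 = ⟪y, x⟫ ^ 2 := by rw [hyx]
      _ ≤ ‖y‖ ^ 2 * ‖x‖ ^ 2 := by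
          rw [← mul_pow, ← sq_abs]
          gcongr
          exact abs_real_inner_le_norm y x
      _ ≤ (1 + |⟪u, v⟫|) * (s ^ 2 + t ^ 2) * ‖x‖ ^ 2 := by gcongr
  rcases (add_nonneg (sq_nonneg s) (sq_nonneg t)).eq_or_lt with h0 | hpos
  · rw [← h0]
    positivity
  · nlinarith

theorem exists_ne_zero_two_mul_abs_inner_mul_inner_eq {u v : E} (hu : ‖u‖ = 1) (hv : ‖v‖ = 1) :
    ∃ x ≠ 0, 2 * |⟪u, x⟫ * ⟪v, x⟫| = (1 + |⟪u, v⟫|) * ‖x‖ ^ 2 := by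
  have of_nonneg (w : E) (hw : ‖w‖ = 1) (hc : 0 ≤ ⟪u, w⟫) :
      ∃ x ≠ 0, 2 * |⟪u, x⟫ * ⟪w, x⟫| = (1 + ⟪u, w⟫) * ‖x‖ ^ 2 := by
    have hx : ‖u + w‖ ^ 2 = 2 * (1 + ⟪u, w⟫) := by
      rw [norm_add_sq_real, hu, hw]
      ring
    refine ⟨u + w, fun h0 => ?_, ?_⟩
    · rw [h0, norm_zero] at hx
      linarith
    · rw [hx, inner_add_right, inner_add_right, real_inner_self_eq_norm_sq,
        real_inner_self_eq_norm_sq, hu, hw, real_inner_comm u w, abs_of_nonneg (by positivity)]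
      ring
  rcases le_total 0 ⟪u, v⟫ with hc | hc
  · simpa only [abs_of_nonneg hc] using of_nonneg v hv hc
  · obtain ⟨x, hx, hx'⟩ :=
      of_nonneg (-v) (by rw [norm_neg, hv]) (by rw [inner_neg_right]; linarith)
    refine ⟨x, hx, ?_⟩
    rw [abs_of_nonpos hc, ← inner_neg_right, ← hx', inner_neg_left, mul_neg, abs_neg]

theorem exists_pos_mul_inner_sq_lt (q : E) : ∃ δ > 0, ∀ x ≠ 0, δ * ⟪q, x⟫ ^ 2 < ‖x‖ ^ 2 := by
  refine ⟨(‖q‖ ^ 2 + 1)⁻¹, by positivity, fun x hx => ?_⟩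
  have hx : 0 < ‖x‖ ^ 2 := by positivity
  rw [inv_mul_lt_iff₀ (by positivity)]
  calc ⟪q, x⟫ ^ 2 ≤ (‖q‖ * ‖x‖) ^ 2 := by
        rw [← sq_abs]
        gcongr
        exact abs_real_inner_le_norm q x
    _ < (‖q‖ ^ 2 + 1) * ‖x‖ ^ 2 := by nlinarith

theorem exists_pos_mul_inner_sq_add_inv_mul_inner_sq_lt {p q : E}
    (hpq : ∀ x ≠ 0, 2 * |⟪p, x⟫ * ⟪q, x⟫| < ‖x‖ ^ 2) :
    ∃ ε > 0, ∀ x ≠ 0, ε * ⟪p, x⟫ ^ 2 + ε⁻¹ * ⟪q, x⟫ ^ 2 < ‖x‖ ^ 2 := by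
  rcases eq_or_ne p 0 with rfl | hp
  · obtain ⟨δ, hδ, hq⟩ := exists_pos_mul_inner_sq_lt q
    exact ⟨δ⁻¹, inv_pos.2 hδ, fun x hx => by simpa using hq x hx⟩
  rcases eq_or_ne q 0 with rfl | hq
  · obtain ⟨δ, hδ, hp'⟩ := exists_pos_mul_inner_sq_lt p
    exact ⟨δ, hδ, fun x hx => by simpa using hp' x hx⟩
  set a := ‖p‖
  set b := ‖q‖
  have ha : 0 < a := norm_pos_iff.2 hp
  have hb : 0 < b := norm_pos_iff.2 hq
  set u := a⁻¹ • p
  set v := b⁻¹ • q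
  have hu : ‖u‖ = 1 := norm_smul_inv_norm hp
  have hv : ‖v‖ = 1 := norm_smul_inv_norm hq
  have hpu (x : E) : ⟪p, x⟫ = a * ⟪u, x⟫ := by
    rw [real_inner_smul_left, mul_inv_cancel_left₀ ha.ne']
  have hqv (x : E) : ⟪q, x⟫ = b * ⟪v, x⟫ := by
    rw [real_inner_smul_left, mul_inv_cancel_left₀ hb.ne']
  have hab : a * b * (1 + |⟪u, v⟫|) < 1 := by
    obtain ⟨x, hx, hx'⟩ := exists_ne_zero_two_mul_abs_inner_mul_inner_eq hu hv
    have h := hpq x hx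
    rw [hpu, hqv, mul_mul_mul_comm, abs_mul, abs_of_pos (mul_pos ha hb), mul_left_comm, hx'] at h
    have : 0 < ‖x‖ ^ 2 := by positivity
    nlinarith
  refine ⟨b / a, div_pos hb ha, fun x hx => ?_⟩
  have : 0 < ‖x‖ ^ 2 := by positivity
  calc b / a * ⟪p, x⟫ ^ 2 + (b / a)⁻¹ * ⟪q, x⟫ ^ 2 = a * b * (⟪u, x⟫ ^ 2 + ⟪v, x⟫ ^ 2) := by
        rw [hpu, hqv]
        field_simp
    _ ≤ a * b * ((1 + |⟪u, v⟫|) * ‖x‖ ^ 2) := by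
        gcongr
        exact inner_sq_add_inner_sq_le hu hv x
    _ < ‖x‖ ^ 2 := by nlinarith

end InnerProductSpace

theorem Matrix.PosDef.exists_pos_mul_sq_add_inv_mul_sq_lt {n : Type*} [Fintype n] [DecidableEq n]
    {P : Matrix n n ℝ} (hP : P.PosDef) {h e : n → ℝ}
    (hhe : ∀ x ≠ 0, 2 * |(h ⬝ᵥ x) * (e ⬝ᵥ x)| < x ⬝ᵥ P *ᵥ x) :
    ∃ ε > 0, ∀ x ≠ 0, ε * (h ⬝ᵥ x) ^ 2 + ε⁻¹ * (e ⬝ᵥ x) ^ 2 < x ⬝ᵥ P *ᵥ x := by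
  -- `n → ℝ` already carries the sup norm, so the instances induced by `P` are named and
  -- passed explicitly where elaboration would otherwise pick the product ones.
  let instNorm : NormedAddCommGroup (n → ℝ) := P.toNormedAddCommGroup hP
  let instInner : @InnerProductSpace ℝ (n → ℝ) _ instNorm.toSeminormedAddCommGroup :=
    P.toInnerProductSpace hP.posSemidef
  have inner_eq (x y : n → ℝ) : ⟪x, y⟫ = x ⬝ᵥ P *ᵥ y := by
    change (P *ᵥ y) ⬝ᵥ x = _
    rw [dotProduct_comm]
  have norm_sq (x : n → ℝ) : @norm _ instNorm.toNorm x ^ 2 = x ⬝ᵥ P *ᵥ x := by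
    rw [← @real_inner_self_eq_norm_sq _ instNorm.toSeminormedAddCommGroup instInner, inner_eq]
  have inner_inv_mulVec (v x : n → ℝ) : ⟪P⁻¹ *ᵥ v, x⟫ = v ⬝ᵥ x := by
    have hPT : Pᵀ = P := isHermitian_iff_isSymm.1 hP.isHermitian
    rw [inner_eq, dotProduct_mulVec, ← mulVec_transpose, hPT, mulVec_mulVec,
      mul_nonsing_inv _ ((isUnit_iff_isUnit_det P).1 hP.isUnit), one_mulVec]
  obtain ⟨ε, hε, hlt⟩ := exists_pos_mul_inner_sq_add_inv_mul_inner_sq_lt (E := n → ℝ)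
    (p := P⁻¹ *ᵥ h) (q := P⁻¹ *ᵥ e) fun x hx => by
      rw [inner_inv_mulVec, inner_inv_mulVec, norm_sq]
      exact hhe x hx
  exact ⟨ε, hε, fun x hx => by simpa only [inner_inv_mulVec, norm_sq] using hlt x hx⟩

section QuadraticForm

variable {n : Type*} [Fintype n]

theorem dotProduct_vecMulVec_mulVec {R : Type*} [CommSemiring R] (u v x : n → R) :
    x ⬝ᵥ vecMulVec u v *ᵥ x = (u ⬝ᵥ x) * (v ⬝ᵥ x) := by
  rw [vecMulVec_mulVec, op_smul_eq_smul, dotProduct_smul, smul_eq_mul, dotProduct_comm x u,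
    mul_comm]

theorem NegDef.posDef_neg {Q : Matrix n n ℝ} (hQ : Q.IsSymm) (hneg : NegDef Q) : (-Q).PosDef :=
  posDef_iff_dotProduct_mulVec.2 ⟨isHermitian_iff_isSymm.2 hQ.neg, fun x hx => by
    simpa [neg_mulVec] using hneg x hx⟩

variable (Q : Matrix n n ℝ) (h e x : n → ℝ)

theorem dotProduct_add_smul_vecMulVec_add_vecMulVec_mulVec (δ : ℝ) :
    x ⬝ᵥ (Q + δ • (vecMulVec h e + vecMulVec e h)) *ᵥ x
      = x ⬝ᵥ Q *ᵥ x + 2 * δ * ((h ⬝ᵥ x) * (e ⬝ᵥ x)) := by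
  simp only [add_mulVec, smul_mulVec, dotProduct_add, dotProduct_smul, smul_eq_mul,
    dotProduct_vecMulVec_mulVec]
  ring

theorem dotProduct_add_smul_vecMulVec_add_inv_smul_vecMulVec_mulVec (ε : ℝ) :
    x ⬝ᵥ (Q + ε • vecMulVec h h + ε⁻¹ • vecMulVec e e) *ᵥ x
      = x ⬝ᵥ Q *ᵥ x + (ε * (h ⬝ᵥ x) ^ 2 + ε⁻¹ * (e ⬝ᵥ x) ^ 2) := by
  simp only [add_mulVec, smul_mulVec, dotProduct_add, dotProduct_smul, smul_eq_mul,
    dotProduct_vecMulVec_mulVec]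
  ring

theorem forall_Icc_negDef_add_smul_iff :
    (∀ δ ∈ Set.Icc (-1 : ℝ) 1, NegDef (Q + δ • (vecMulVec h e + vecMulVec e h))) ↔
      ∀ x ≠ 0, x ⬝ᵥ Q *ᵥ x + 2 * |(h ⬝ᵥ x) * (e ⬝ᵥ x)| < 0 := by
  simp only [NegDef, dotProduct_add_smul_vecMulVec_add_vecMulVec_mulVec]
  constructor
  · intro hδ x hx
    have h₁ := hδ 1 (by norm_num) x hx
    have h₂ := hδ (-1) (by norm_num) x hx
    cases abs_cases ((h ⬝ᵥ x) * (e ⬝ᵥ x)) <;> linarith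
  · rintro hQhe δ ⟨hδ₁, hδ₂⟩ x hx
    have hδ : δ * ((h ⬝ᵥ x) * (e ⬝ᵥ x)) ≤ |(h ⬝ᵥ x) * (e ⬝ᵥ x)| := by
      cases abs_cases ((h ⬝ᵥ x) * (e ⬝ᵥ x)) <;> nlinarith
    linarith [hQhe x hx]

end QuadraticForm

theorem two_mul_abs_mul_le_mul_sq_add_inv_mul_sq {ε : ℝ} (hε : 0 < ε) (a b : ℝ) :
    2 * |a * b| ≤ ε * a ^ 2 + ε⁻¹ * b ^ 2 := by
  have key : ε * a ^ 2 + ε⁻¹ * b ^ 2 - 2 * |a * b| = ε⁻¹ * (ε * |a| - |b|) ^ 2 := by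
    rw [abs_mul]
    field_simp
    rw [← sq_abs a, ← sq_abs b]
    ring
  nlinarith [key, inv_pos.2 hε, sq_nonneg (ε * |a| - |b|)]

theorem robust_rank_one_scalar_uncertainty (k : ℕ)
    (Q : Matrix (Fin k) (Fin k) ℝ) (hQ : Q.IsSymm) (h e : Fin k → ℝ) :
    (∀ δ : ℝ, δ ∈ Set.Icc (-1 : ℝ) 1 →
        NegDef (Q + δ • (vecMulVec h e + vecMulVec e h))) ↔
    (∃ ε : ℝ, 0 < ε ∧
        NegDef (Q + ε • vecMulVec h h + ε⁻¹ • vecMulVec e e)) := by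
  rw [forall_Icc_negDef_add_smul_iff]
  simp only [NegDef, dotProduct_add_smul_vecMulVec_add_inv_smul_vecMulVec_mulVec]
  constructor
  · intro hQhe
    have hP : (-Q).PosDef := NegDef.posDef_neg hQ fun x hx => by
      linarith [hQhe x hx, abs_nonneg ((h ⬝ᵥ x) * (e ⬝ᵥ x))]
    have quad_neg (x : Fin k → ℝ) : x ⬝ᵥ (-Q) *ᵥ x = -(x ⬝ᵥ Q *ᵥ x) := by
      rw [neg_mulVec, dotProduct_neg]
    obtain ⟨ε, hε, hlt⟩ := hP.exists_pos_mul_sq_add_inv_mul_sq_lt (h := h) (e := e) fun x hx => by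
      linarith [hQhe x hx, quad_neg x]
    exact ⟨ε, hε, fun x hx => by linarith [hlt x hx, quad_neg x]⟩
  · rintro ⟨ε, hε, hneg⟩ x hx
    linarith [hneg x hx, two_mul_abs_mul_le_mul_sq_add_inv_mul_sq hε (h ⬝ᵥ x) (e ⬝ᵥ x)]
end

section
/- Let Q be a real symmetric k×k matrix, H a real k×r matrix, E a real s×k matrix, and R a real symmetric positive definite s×s matrix. Then Q + H F E + Eᵀ Fᵀ Hᵀ < 0 holds for every real r×s matrix F satisfying Fᵀ F ≤ R (in the Loewner order, i.e., R - Fᵀ F is positive semidefinite) if and only if there exists a scalar ε > 0 such that Q + ε² H Hᵀ + ε⁻² Eᵀ R E < 0. -/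
open Matrix

/-!
Sufficiency is completing the square: if `FᵀF ≤ R`, then
`ε²HHᵀ + ε⁻²EᵀRE - (HFE + EᵀFᵀHᵀ) = (εHᵀ - ε⁻¹FE)ᵀ(εHᵀ - ε⁻¹FE) + ε⁻²Eᵀ(R - FᵀF)E ≥ 0`.

For necessity, put `G = HHᵀ`, `K = EᵀRE`. Testing the hypothesis on a rank-one `F` aligned with
`Hᵀx` and `REx` gives `xᵀQx + 2√(xᵀGx · xᵀKx) < 0` for every `x ≠ 0`, i.e. `xᵀ(Q + τG + τ⁻¹K)x < 0`
for the best `τ = τ(x)`; the point is to find one `τ` that works for all `x`. Write `τ = exp t`,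
`M t = Q + exp t • G + exp (-t) • K` and `D t = exp t • G - exp (-t) • K = dM/dt`, and suppose no
`M t` is negative definite. Then the top unit vectors `x` of `M t` have `xᵀ(D t)x ≤ 0` for
`t ≪ 0` and `≥ 0` for `t ≫ 0`; the parameters admitting a top unit vector of either sign form
closed sets, so by connectedness some `t` admits both. Together with `0`, the top unit vectors of
`M t` form a subspace (the kernel of `λ_max - M t`), so it contains some `z ≠ 0` with
`zᵀ(D t)z = 0`. For this `z`, `τ = exp t` is the optimal `τ`, so
`λ_max (M t) · |z|² = zᵀ(M t)z < 0`, a contradiction.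
-/

open Filter Topology Set Real

section UnitSphere

variable {ι : Type*} [Fintype ι]

/-- The Euclidean unit sphere; `ι → ℝ` carries the sup norm, so this is not `Metric.sphere 0 1`. -/
def unitSphere (ι : Type*) [Fintype ι] : Set (ι → ℝ) := {x | x ⬝ᵥ x = 1}

lemma dotProduct_self_pos {x : ι → ℝ} (hx : x ≠ 0) : 0 < x ⬝ᵥ x := by
  simpa using (dotProduct_star_self_pos_iff (v := x)).2 hx

lemma dotProduct_self_nonneg (x : ι → ℝ) : 0 ≤ x ⬝ᵥ x :=
  Finset.sum_nonneg fun i _ => mul_self_nonneg (x i)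

lemma ne_zero_of_mem_unitSphere {x : ι → ℝ} (hx : x ∈ unitSphere ι) : x ≠ 0 := by
  rintro rfl
  simp [unitSphere] at hx

lemma isCompact_unitSphere : IsCompact (unitSphere ι) := by
  refine Metric.isCompact_of_isClosed_isBounded (isClosed_eq (by fun_prop) continuous_const)
    ((Metric.isBounded_closedBall (x := 0) (r := 1)).subset fun x hx => ?_)
  rw [mem_closedBall_zero_iff, pi_norm_le_iff_of_nonneg zero_le_one]
  intro i
  rw [Real.norm_eq_abs, abs_le_one_iff_mul_self_le_one]
  calc x i * x i ≤ x ⬝ᵥ x :=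
        Finset.single_le_sum (f := fun j => x j * x j) (fun j _ => mul_self_nonneg _)
          (Finset.mem_univ i)
    _ = 1 := hx

lemma dotProduct_mulVec_inv_sqrt_smul (M : Matrix ι ι ℝ) (x : ι → ℝ) :
    ((√(x ⬝ᵥ x))⁻¹ • x) ⬝ᵥ M *ᵥ ((√(x ⬝ᵥ x))⁻¹ • x) = x ⬝ᵥ M *ᵥ x / (x ⬝ᵥ x) := by
  have hsq : (√(x ⬝ᵥ x))⁻¹ * (√(x ⬝ᵥ x))⁻¹ = (x ⬝ᵥ x)⁻¹ := by
    rw [← mul_inv, Real.mul_self_sqrt (dotProduct_self_nonneg x)]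
  simp only [mulVec_smul, dotProduct_smul, smul_dotProduct, smul_eq_mul, ← mul_assoc, hsq]
  ring

lemma inv_sqrt_smul_mem_unitSphere {x : ι → ℝ} (hx : x ≠ 0) :
    (√(x ⬝ᵥ x))⁻¹ • x ∈ unitSphere ι := by
  classical
  simpa [unitSphere, div_self (dotProduct_self_pos hx).ne'] using
    dotProduct_mulVec_inv_sqrt_smul 1 x

def IsMaxUnitVec (M : Matrix ι ι ℝ) (x : ι → ℝ) : Prop :=
  x ∈ unitSphere ι ∧ IsMaxOn (fun y => y ⬝ᵥ M *ᵥ y) (unitSphere ι) x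

lemma unitSphere_nonempty [Nonempty ι] : (unitSphere ι).Nonempty := by
  classical
  exact ⟨Pi.single (Classical.arbitrary ι) 1, by simp [unitSphere]⟩

lemma exists_isMaxUnitVec [Nonempty ι] (M : Matrix ι ι ℝ) : ∃ x, IsMaxUnitVec M x := by
  simpa only [IsMaxUnitVec, exists_prop] using
    isCompact_unitSphere.exists_isMaxOn unitSphere_nonempty (by fun_prop)

lemma negDef_iff_unitSphere {M : Matrix ι ι ℝ} :
    NegDef M ↔ ∀ x ∈ unitSphere ι, x ⬝ᵥ M *ᵥ x < 0 := by
  refine ⟨fun hM x hx => hM x (ne_zero_of_mem_unitSphere hx), fun hM x hx => ?_⟩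
  have := hM _ (inv_sqrt_smul_mem_unitSphere hx)
  rw [dotProduct_mulVec_inv_sqrt_smul] at this
  simpa using (div_lt_iff₀ (dotProduct_self_pos hx)).1 this

lemma dotProduct_mulVec_le_of_isMaxOn {M : Matrix ι ι ℝ} {x : ι → ℝ}
    (hx : IsMaxOn (fun y => y ⬝ᵥ M *ᵥ y) (unitSphere ι) x) (y : ι → ℝ) :
    y ⬝ᵥ M *ᵥ y ≤ (x ⬝ᵥ M *ᵥ x) * (y ⬝ᵥ y) := by
  rcases eq_or_ne y 0 with rfl | hy
  · simp
  have h : ((√(y ⬝ᵥ y))⁻¹ • y) ⬝ᵥ M *ᵥ ((√(y ⬝ᵥ y))⁻¹ • y) ≤ x ⬝ᵥ M *ᵥ x :=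
    hx (inv_sqrt_smul_mem_unitSphere hy)
  rwa [dotProduct_mulVec_inv_sqrt_smul, div_le_iff₀ (dotProduct_self_pos hy)] at h

lemma negDef_of_isMaxOn {M : Matrix ι ι ℝ} {x : ι → ℝ}
    (hx : IsMaxOn (fun y => y ⬝ᵥ M *ᵥ y) (unitSphere ι) x) (hneg : x ⬝ᵥ M *ᵥ x < 0) :
    NegDef M := fun y hy =>
  (dotProduct_mulVec_le_of_isMaxOn hx y).trans_lt
    (mul_neg_of_neg_of_pos hneg (dotProduct_self_pos hy))

lemma dotProduct_mulVec_eq_of_isMaxUnitVec {M : Matrix ι ι ℝ} (hM : M.IsHermitian)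
    {x y : ι → ℝ} (hx : IsMaxUnitVec M x) (hy : IsMaxUnitVec M y) (a b : ℝ) :
    (a • x + b • y) ⬝ᵥ M *ᵥ (a • x + b • y) =
      (x ⬝ᵥ M *ᵥ x) * ((a • x + b • y) ⬝ᵥ (a • x + b • y)) := by
  classical
  set c := x ⬝ᵥ M *ᵥ x
  have hP : (c • 1 - M).PosSemidef := by
    refine .of_dotProduct_mulVec_nonneg ?_ fun v => ?_
    · simpa [IsHermitian, conjTranspose_sub, conjTranspose_smul] using hM.eq
    · simpa [sub_mulVec, smul_mulVec, mul_comm] using dotProduct_mulVec_le_of_isMaxOn hx.2 v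
  have hker : ∀ v ∈ unitSphere ι, v ⬝ᵥ M *ᵥ v = c → (c • 1 - M) *ᵥ v = 0 := fun v hv hvc =>
    (hP.dotProduct_mulVec_zero_iff v).1 (by simp_all [unitSphere, sub_mulVec, smul_mulVec])
  have hz : (c • 1 - M) *ᵥ (a • x + b • y) = 0 := by
    rw [mulVec_add, mulVec_smul, mulVec_smul, hker x hx.1 rfl,
      hker y hy.1 (le_antisymm (hx.2 hy.1) (hy.2 hx.1)), smul_zero, smul_zero, add_zero]
  have := congrArg ((a • x + b • y) ⬝ᵥ ·) hz
  simp only [sub_mulVec, smul_mulVec, one_mulVec, dotProduct_sub, dotProduct_smul, smul_eq_mul,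
    dotProduct_zero] at this
  linarith

lemma exists_ne_zero_dotProduct_mulVec_eq_zero (D : Matrix ι ι ℝ) {x y : ι → ℝ} (hx : x ≠ 0)
    (hy : y ≠ 0) (hxD : 0 ≤ x ⬝ᵥ D *ᵥ x) (hyD : y ⬝ᵥ D *ᵥ y ≤ 0) :
    ∃ a b : ℝ, a • x + b • y ≠ 0 ∧ (a • x + b • y) ⬝ᵥ D *ᵥ (a • x + b • y) = 0 := by
  rcases hxD.eq_or_lt with hx0 | hxD
  · exact ⟨1, 0, by simpa using hx, by simpa using hx0.symm⟩
  obtain ⟨s, -, hs⟩ : ∃ s ∈ Icc (0 : ℝ) 1,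
      ((1 - s) • x + s • y) ⬝ᵥ D *ᵥ ((1 - s) • x + s • y) = 0 :=
    intermediate_value_Icc' zero_le_one (by fun_prop) ⟨by simpa using hyD, by simpa using hxD.le⟩
  refine ⟨1 - s, s, fun hz => ?_, hs⟩
  -- A zero of the segment at `s` gives `(1 - s)² xᵀDx = s² yᵀDy ≤ 0` with `xᵀDx > 0`, so `s = 1`.
  have hs1 : 1 - s = 0 := by
    have h := congrArg (fun v => v ⬝ᵥ D *ᵥ v) (eq_neg_of_add_eq_zero_left hz)
    simp only [mulVec_smul, mulVec_neg, dotProduct_smul, smul_dotProduct, dotProduct_neg,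
      neg_dotProduct, smul_eq_mul] at h
    have hsq : (1 - s) * (1 - s) * (x ⬝ᵥ D *ᵥ x) ≤ 0 := by nlinarith [mul_self_nonneg s]
    exact mul_self_eq_zero.1 (le_antisymm (by nlinarith) (mul_self_nonneg _))
  apply hy
  simpa [hs1, show s = 1 by linarith] using hz

lemma NegDef.eventually_add_smul {Q : Matrix ι ι ℝ} (hQ : NegDef Q) (G : Matrix ι ι ℝ) :
    ∀ᶠ c in 𝓝 (0 : ℝ), NegDef (Q + c • G) := by
  simp_rw [negDef_iff_unitSphere]
  refine isCompact_unitSphere.eventually_forall_of_forall_eventually fun x hx => ?_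
  exact (isOpen_lt (by fun_prop) continuous_const).mem_nhds
    (by simpa using hQ x (ne_zero_of_mem_unitSphere hx))

lemma isCompact_setOf_exists_isMaxUnitVec {X : Type*} [TopologicalSpace X] {K : Set X}
    (hK : IsCompact K) {M D : X → Matrix ι ι ℝ} (hM : Continuous M) (hD : Continuous D) :
    IsCompact {t ∈ K | ∃ x, IsMaxUnitVec (M t) x ∧ 0 ≤ x ⬝ᵥ D t *ᵥ x} := by
  have hmax : IsClosed {p : X × (ι → ℝ) |
      IsMaxOn (fun y => y ⬝ᵥ M p.1 *ᵥ y) (unitSphere ι) p.2} := by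
    simp only [isMaxOn_iff, ofPred_forall]
    exact isClosed_biInter fun y _ => isClosed_le (by fun_prop) (by fun_prop)
  have hsign : IsClosed {p : X × (ι → ℝ) | 0 ≤ p.2 ⬝ᵥ D p.1 *ᵥ p.2} :=
    isClosed_le continuous_const (by fun_prop)
  convert ((hK.prod isCompact_unitSphere).inter_right (hmax.inter hsign)).image
    continuous_fst using 1
  ext t
  simp only [IsMaxUnitVec, mem_ofPred_eq, mem_image, mem_inter_iff, mem_prod, Prod.exists]
  aesop

lemma exists_isMaxUnitVec_of_sign_change [Nonempty ι] {M D : ℝ → Matrix ι ι ℝ}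
    (hM : Continuous M) (hD : Continuous D) {a b : ℝ} (hab : a ≤ b)
    (ha : ∃ x, IsMaxUnitVec (M a) x ∧ x ⬝ᵥ D a *ᵥ x ≤ 0)
    (hb : ∃ x, IsMaxUnitVec (M b) x ∧ 0 ≤ x ⬝ᵥ D b *ᵥ x) :
    ∃ t, (∃ x, IsMaxUnitVec (M t) x ∧ 0 ≤ x ⬝ᵥ D t *ᵥ x) ∧
      ∃ y, IsMaxUnitVec (M t) y ∧ y ⬝ᵥ D t *ᵥ y ≤ 0 := by
  have hneg (t : ℝ) (x : ι → ℝ) : 0 ≤ x ⬝ᵥ (-D t) *ᵥ x ↔ x ⬝ᵥ D t *ᵥ x ≤ 0 := by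
    simp [neg_mulVec]
  have hA :=
    (isCompact_setOf_exists_isMaxUnitVec (isCompact_Icc (a := a) (b := b)) hM hD).isClosed
  have hB :=
    (isCompact_setOf_exists_isMaxUnitVec (isCompact_Icc (a := a) (b := b)) hM hD.neg).isClosed
  simp only [Pi.neg_apply, hneg] at hB
  have hcover : Icc a b ⊆ {t ∈ Icc a b | ∃ x, IsMaxUnitVec (M t) x ∧ 0 ≤ x ⬝ᵥ D t *ᵥ x} ∪
      {t ∈ Icc a b | ∃ x, IsMaxUnitVec (M t) x ∧ x ⬝ᵥ D t *ᵥ x ≤ 0} := fun t ht => by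
    obtain ⟨x, hx⟩ := exists_isMaxUnitVec (M t)
    rcases le_total 0 (x ⬝ᵥ D t *ᵥ x) with h | h
    · exact Or.inl ⟨ht, x, hx, h⟩
    · exact Or.inr ⟨ht, x, hx, h⟩
  obtain ⟨t, -, ⟨-, hpos⟩, -, hnonpos⟩ := isPreconnected_closed_iff.1 isPreconnected_Icc _ _
    hA hB hcover ⟨b, right_mem_Icc.2 hab, right_mem_Icc.2 hab, hb⟩
    ⟨a, left_mem_Icc.2 hab, left_mem_Icc.2 hab, ha⟩
  exact ⟨t, hpos, hnonpos⟩

end UnitSphere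

lemma exp_mul_add_exp_neg_mul_le_two_sqrt {g h t : ℝ} (hbal : exp t * g = exp (-t) * h) :
    exp t * g + exp (-t) * h ≤ 2 * √(g * h) := by
  have hgh : g * h = (exp t * g) ^ 2 := by
    calc g * h = exp t * g * (exp (-t) * h) := by
          rw [mul_mul_mul_comm, ← exp_add, add_neg_cancel, exp_zero, one_mul]
      _ = (exp t * g) ^ 2 := by rw [← hbal, sq]
  rw [← hbal, hgh, Real.sqrt_sq_eq_abs]
  linarith [le_abs_self (exp t * g)]

section Pencil

variable {ι : Type*} [Fintype ι] {Q G K : Matrix ι ι ℝ}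

lemma dotProduct_add_exp_smul_add_exp_neg_smul_mulVec (t : ℝ) (x : ι → ℝ) :
    x ⬝ᵥ (Q + exp t • G + exp (-t) • K) *ᵥ x =
      x ⬝ᵥ Q *ᵥ x + exp t * (x ⬝ᵥ G *ᵥ x) + exp (-t) * (x ⬝ᵥ K *ᵥ x) := by
  simp only [add_mulVec, smul_mulVec, dotProduct_add, dotProduct_smul, smul_eq_mul]

lemma dotProduct_exp_smul_sub_exp_neg_smul_mulVec (t : ℝ) (x : ι → ℝ) :
    x ⬝ᵥ (exp t • G - exp (-t) • K) *ᵥ x = exp t * (x ⬝ᵥ G *ᵥ x) - exp (-t) * (x ⬝ᵥ K *ᵥ x) := by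
  simp only [sub_mulVec, smul_mulVec, dotProduct_sub, dotProduct_smul, smul_eq_mul]

lemma negDef_of_isMaxUnitVec_of_sign_change (hQ : Q.IsHermitian) (hG : G.IsHermitian)
    (hK : K.IsHermitian)
    (h : ∀ x ≠ 0, x ⬝ᵥ Q *ᵥ x + 2 * √((x ⬝ᵥ G *ᵥ x) * (x ⬝ᵥ K *ᵥ x)) < 0) {t : ℝ} {x y : ι → ℝ}
    (hx : IsMaxUnitVec (Q + exp t • G + exp (-t) • K) x)
    (hy : IsMaxUnitVec (Q + exp t • G + exp (-t) • K) y)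
    (hxD : 0 ≤ x ⬝ᵥ (exp t • G - exp (-t) • K) *ᵥ x)
    (hyD : y ⬝ᵥ (exp t • G - exp (-t) • K) *ᵥ y ≤ 0) :
    NegDef (Q + exp t • G + exp (-t) • K) := by
  obtain ⟨α, β, hz, hzD⟩ := exists_ne_zero_dotProduct_mulVec_eq_zero _
    (ne_zero_of_mem_unitSphere hx.1) (ne_zero_of_mem_unitSphere hy.1) hxD hyD
  have hzM := dotProduct_mulVec_eq_of_isMaxUnitVec
    ((hQ.add (hG.smul (.all _))).add (hK.smul (.all _))) hx hy α β
  rw [dotProduct_exp_smul_sub_exp_neg_smul_mulVec, sub_eq_zero] at hzD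
  have hzneg : (α • x + β • y) ⬝ᵥ (Q + exp t • G + exp (-t) • K) *ᵥ (α • x + β • y) < 0 := by
    rw [dotProduct_add_exp_smul_add_exp_neg_smul_mulVec, add_assoc]
    linarith [h _ hz, exp_mul_add_exp_neg_mul_le_two_sqrt hzD]
  exact negDef_of_isMaxOn hx.2
    (neg_of_mul_neg_left (hzM ▸ hzneg) (dotProduct_self_nonneg _))

theorem exists_negDef_add_exp_smul_add_exp_neg_smul (hQ : Q.IsHermitian) (hG : G.IsHermitian)
    (hK : K.IsHermitian)
    (h : ∀ x ≠ 0, x ⬝ᵥ Q *ᵥ x + 2 * √((x ⬝ᵥ G *ᵥ x) * (x ⬝ᵥ K *ᵥ x)) < 0) :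
    ∃ t : ℝ, NegDef (Q + exp t • G + exp (-t) • K) := by
  rcases isEmpty_or_nonempty ι with hι | hι
  · exact ⟨0, fun x hx => (hx (Subsingleton.elim x 0)).elim⟩
  by_contra! hnot
  have hmax (t : ℝ) (x : ι → ℝ) (hx : IsMaxUnitVec (Q + exp t • G + exp (-t) • K) x) :
      0 ≤ x ⬝ᵥ Q *ᵥ x + exp t * (x ⬝ᵥ G *ᵥ x) + exp (-t) * (x ⬝ᵥ K *ᵥ x) :=
    dotProduct_add_exp_smul_add_exp_neg_smul_mulVec t x ▸
      not_lt.1 fun hneg => hnot t (negDef_of_isMaxOn hx.2 hneg)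
  have hQneg : NegDef Q := fun x hx =>
    (le_add_of_nonneg_right (by positivity)).trans_lt (h x hx)
  have hquad (c : ℝ) (L : Matrix ι ι ℝ) (x : ι → ℝ) :
      x ⬝ᵥ (Q + c • L) *ᵥ x = x ⬝ᵥ Q *ᵥ x + c * (x ⬝ᵥ L *ᵥ x) := by
    simp only [add_mulVec, smul_mulVec, dotProduct_add, dotProduct_smul, smul_eq_mul]
  obtain ⟨a, ha, haG⟩ := ((eventually_le_atBot 0).and
    ((tendsto_exp_atBot.const_mul 2).eventually (mul_zero (2 : ℝ) ▸
      hQneg.eventually_add_smul G))).exists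
  obtain ⟨b, hb, hbK⟩ := ((eventually_ge_atTop 0).and
    ((tendsto_exp_neg_atTop_nhds_zero.const_mul 2).eventually (mul_zero (2 : ℝ) ▸
      hQneg.eventually_add_smul K))).exists
  have hleft : ∃ x, IsMaxUnitVec (Q + exp a • G + exp (-a) • K) x ∧
      x ⬝ᵥ (exp a • G - exp (-a) • K) *ᵥ x ≤ 0 := by
    obtain ⟨x, hx⟩ := exists_isMaxUnitVec (Q + exp a • G + exp (-a) • K)
    have := hquad _ G x ▸ haG x (ne_zero_of_mem_unitSphere hx.1)
    exact ⟨x, hx, by rw [dotProduct_exp_smul_sub_exp_neg_smul_mulVec]; linarith [hmax a x hx]⟩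
  have hright : ∃ x, IsMaxUnitVec (Q + exp b • G + exp (-b) • K) x ∧
      0 ≤ x ⬝ᵥ (exp b • G - exp (-b) • K) *ᵥ x := by
    obtain ⟨x, hx⟩ := exists_isMaxUnitVec (Q + exp b • G + exp (-b) • K)
    have := hquad _ K x ▸ hbK x (ne_zero_of_mem_unitSphere hx.1)
    exact ⟨x, hx, by rw [dotProduct_exp_smul_sub_exp_neg_smul_mulVec]; linarith [hmax b x hx]⟩
  obtain ⟨t, ⟨x, hx, hxD⟩, y, hy, hyD⟩ := exists_isMaxUnitVec_of_sign_change
    (M := fun t => Q + exp t • G + exp (-t) • K) (D := fun t => exp t • G - exp (-t) • K)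
    (by fun_prop) (by fun_prop) (ha.trans hb) hleft hright
  exact hnot t (negDef_of_isMaxUnitVec_of_sign_change hQ hG hK h hx hy hxD hyD)

end Pencil

section Petersen

variable {κ ρ σ : Type*} [Fintype κ] [Fintype ρ] [Fintype σ]

lemma Matrix.PosSemidef.sq_dotProduct_mulVec_le {R : Matrix σ σ ℝ} (hR : R.PosSemidef)
    (x y : σ → ℝ) :
    (x ⬝ᵥ R *ᵥ y) ^ 2 ≤ (x ⬝ᵥ R *ᵥ x) * (y ⬝ᵥ R *ᵥ y) := by
  let := R.toSeminormedAddCommGroup hR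
  let := R.toInnerProductSpace hR
  have h := real_inner_mul_inner_self_le x y
  change ((R *ᵥ y) ⬝ᵥ star x) * ((R *ᵥ y) ⬝ᵥ star x) ≤
    ((R *ᵥ x) ⬝ᵥ star x) * ((R *ᵥ y) ⬝ᵥ star y) at h
  simpa [sq, dotProduct_comm] using h

lemma exists_posSemidef_sub_transpose_mul_self_and_dotProduct_mulVec_eq {R : Matrix σ σ ℝ}
    (hR : R.PosSemidef) (a : ρ → ℝ) (b : σ → ℝ) :
    ∃ F : Matrix ρ σ ℝ, (R - Fᵀ * F).PosSemidef ∧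
      a ⬝ᵥ F *ᵥ b = √((a ⬝ᵥ a) * (b ⬝ᵥ R *ᵥ b)) := by
  set p := (a ⬝ᵥ a) * (b ⬝ᵥ R *ᵥ b)
  have hp : 0 ≤ p := mul_nonneg (dotProduct_self_nonneg a)
    (by simpa using hR.dotProduct_mulVec_nonneg b)
  -- If `p = 0`, then `(√p)⁻¹ = 0` and `F = 0`, which also works.
  set F : Matrix ρ σ ℝ := (√p)⁻¹ • vecMulVec a (R *ᵥ b)
  have hF (y : σ → ℝ) : F *ᵥ y = ((√p)⁻¹ * (y ⬝ᵥ R *ᵥ b)) • a := by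
    simp [F, smul_mulVec, vecMulVec_mulVec, smul_smul, dotProduct_comm (R *ᵥ b)]
  have hsq : (√p)⁻¹ * (√p)⁻¹ * p ≤ 1 := by
    rw [← mul_inv, Real.mul_self_sqrt hp]
    exact inv_mul_le_one_of_le₀ le_rfl hp
  refine ⟨F, .of_dotProduct_mulVec_nonneg ?_ fun y => ?_, ?_⟩
  · simpa using hR.isHermitian.sub (isHermitian_conjTranspose_mul_self F)
  · have hFF : y ⬝ᵥ (Fᵀ * F) *ᵥ y = (F *ᵥ y) ⬝ᵥ (F *ᵥ y) := by
      rw [← mulVec_mulVec, dotProduct_mulVec, vecMul_transpose, dotProduct_comm]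
    have hcs := hR.sq_dotProduct_mulVec_le y b
    have hy : 0 ≤ y ⬝ᵥ R *ᵥ y := by simpa using hR.dotProduct_mulVec_nonneg y
    simp only [star_trivial, sub_mulVec, dotProduct_sub, hFF, hF, dotProduct_smul,
      smul_dotProduct, smul_eq_mul, sub_nonneg]
    calc (√p)⁻¹ * (y ⬝ᵥ R *ᵥ b) * ((√p)⁻¹ * (y ⬝ᵥ R *ᵥ b) * (a ⬝ᵥ a))
        = (√p)⁻¹ * (√p)⁻¹ * (a ⬝ᵥ a) * (y ⬝ᵥ R *ᵥ b) ^ 2 := by ring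
      _ ≤ (√p)⁻¹ * (√p)⁻¹ * (a ⬝ᵥ a) * ((y ⬝ᵥ R *ᵥ y) * (b ⬝ᵥ R *ᵥ b)) :=
        mul_le_mul_of_nonneg_left hcs (mul_nonneg (mul_self_nonneg _) (dotProduct_self_nonneg a))
      _ = (√p)⁻¹ * (√p)⁻¹ * p * (y ⬝ᵥ R *ᵥ y) := by ring
      _ ≤ y ⬝ᵥ R *ᵥ y := mul_le_of_le_one_left hy hsq
  · rw [hF, dotProduct_smul, smul_eq_mul]
    calc (√p)⁻¹ * (b ⬝ᵥ R *ᵥ b) * (a ⬝ᵥ a) = p / √p := by ring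
      _ = √p := Real.div_sqrt

lemma posSemidef_sub_mul_mul_add_transpose (H : Matrix κ ρ ℝ) (F : Matrix ρ σ ℝ)
    (E : Matrix σ κ ℝ) (R : Matrix σ σ ℝ) {ε : ℝ} (hε : ε ≠ 0) (hF : (R - Fᵀ * F).PosSemidef) :
    (ε ^ 2 • (H * Hᵀ) + (ε ^ 2)⁻¹ • (Eᵀ * R * E) - (H * F * E + Eᵀ * Fᵀ * Hᵀ)).PosSemidef := by
  have key : ε ^ 2 • (H * Hᵀ) + (ε ^ 2)⁻¹ • (Eᵀ * R * E) - (H * F * E + Eᵀ * Fᵀ * Hᵀ) =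
      (ε • Hᵀ - ε⁻¹ • (F * E))ᴴ * (ε • Hᵀ - ε⁻¹ • (F * E)) +
        (ε⁻¹ ^ 2) • (Eᴴ * (R - Fᵀ * F) * E) := by
    simp only [conjTranspose_eq_transpose_of_trivial, transpose_sub, transpose_smul,
      transpose_mul, transpose_transpose, Matrix.sub_mul, Matrix.mul_sub, Matrix.smul_mul,
      Matrix.mul_smul, smul_sub, smul_smul, Matrix.mul_assoc, sq, mul_inv,
      mul_inv_cancel₀ hε, inv_mul_cancel₀ hε, one_smul]
    abel
  rw [key]
  exact (posSemidef_conjTranspose_mul_self _).add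
    ((hF.conjTranspose_mul_mul_same E).smul (by positivity))

lemma NegDef.of_posSemidef_sub {M N : Matrix κ κ ℝ} (hN : NegDef N) (h : (N - M).PosSemidef) :
    NegDef M := fun x hx => by
  have := h.dotProduct_mulVec_nonneg x
  simp only [star_trivial, sub_mulVec, dotProduct_sub, sub_nonneg] at this
  exact this.trans_lt (hN x hx)

lemma dotProduct_mul_mulVec {ι : Type*} [Fintype ι] (A : Matrix κ ι ℝ) (B : Matrix ι ρ ℝ)
    (x : κ → ℝ) (y : ρ → ℝ) : x ⬝ᵥ (A * B) *ᵥ y = (Aᵀ *ᵥ x) ⬝ᵥ B *ᵥ y := by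
  rw [← mulVec_mulVec, dotProduct_mulVec, ← mulVec_transpose]

lemma dotProduct_mulVec_add_two_sqrt_neg {Q : Matrix κ κ ℝ} {H : Matrix κ ρ ℝ}
    {E : Matrix σ κ ℝ} {R : Matrix σ σ ℝ} (hR : R.PosSemidef)
    (hF : ∀ F : Matrix ρ σ ℝ, (R - Fᵀ * F).PosSemidef → NegDef (Q + H * F * E + Eᵀ * Fᵀ * Hᵀ))
    {x : κ → ℝ} (hx : x ≠ 0) :
    x ⬝ᵥ Q *ᵥ x + 2 * √((x ⬝ᵥ (H * Hᵀ) *ᵥ x) * (x ⬝ᵥ (Eᵀ * R * E) *ᵥ x)) < 0 := by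
  obtain ⟨F, hFR, hFx⟩ :=
    exists_posSemidef_sub_transpose_mul_self_and_dotProduct_mulVec_eq hR (Hᵀ *ᵥ x) (E *ᵥ x)
  have h := hF F hFR x hx
  have hHFE : x ⬝ᵥ (H * F * E) *ᵥ x = (Hᵀ *ᵥ x) ⬝ᵥ F *ᵥ (E *ᵥ x) := by
    rw [Matrix.mul_assoc, dotProduct_mul_mulVec, ← mulVec_mulVec]
  have hEFH : x ⬝ᵥ (Eᵀ * Fᵀ * Hᵀ) *ᵥ x = (Hᵀ *ᵥ x) ⬝ᵥ F *ᵥ (E *ᵥ x) := by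
    rw [Matrix.mul_assoc, dotProduct_mul_mulVec, ← mulVec_mulVec, transpose_transpose,
      dotProduct_mulVec, vecMul_transpose, dotProduct_comm]
  have hERE : x ⬝ᵥ (Eᵀ * R * E) *ᵥ x = (E *ᵥ x) ⬝ᵥ R *ᵥ (E *ᵥ x) := by
    rw [Matrix.mul_assoc, dotProduct_mul_mulVec, ← mulVec_mulVec, transpose_transpose]
  simp only [add_mulVec, dotProduct_add] at h
  rw [hHFE, hEFH] at h
  rw [dotProduct_mul_mulVec, hERE, ← hFx]
  linarith

end Petersen

theorem petersen_lemma_norm_bounded_general (k r s : ℕ)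
    (Q : Matrix (Fin k) (Fin k) ℝ) (hQ : Q.IsSymm)
    (H : Matrix (Fin k) (Fin r) ℝ) (E : Matrix (Fin s) (Fin k) ℝ)
    (R : Matrix (Fin s) (Fin s) ℝ) (hR : R.PosDef) :
    (∀ F : Matrix (Fin r) (Fin s) ℝ, (R - Fᵀ * F).PosSemidef →
        NegDef (Q + H * F * E + Eᵀ * Fᵀ * Hᵀ)) ↔
    (∃ ε : ℝ, 0 < ε ∧
        NegDef (Q + ε ^ 2 • (H * Hᵀ) + (ε ^ 2)⁻¹ • (Eᵀ * R * E))) := by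
  constructor
  · intro hF
    obtain ⟨t, ht⟩ := exists_negDef_add_exp_smul_add_exp_neg_smul (isHermitian_iff_isSymm.2 hQ)
      (by simpa using isHermitian_mul_conjTranspose_self H)
      (by simpa using (hR.posSemidef.conjTranspose_mul_mul_same E).isHermitian)
      fun x hx => dotProduct_mulVec_add_two_sqrt_neg hR.posSemidef hF hx
    refine ⟨exp (t / 2), exp_pos _, ?_⟩
    rwa [← exp_nat_mul, Nat.cast_ofNat, mul_div_cancel₀ t two_ne_zero, ← exp_neg]
  · rintro ⟨ε, hε, hneg⟩ F hF
    refine hneg.of_posSemidef_sub ?_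
    simpa [add_assoc] using posSemidef_sub_mul_mul_add_transpose H F E R hε.ne' hF

theorem petersen_lemma_norm_bounded (k r s : ℕ)
    (Q : Matrix (Fin k) (Fin k) ℝ) (hQ : Q.IsSymm)
    (H : Matrix (Fin k) (Fin r) ℝ) (E : Matrix (Fin s) (Fin k) ℝ)
    (R : Matrix (Fin s) (Fin s) ℝ) (hRsymm : R.IsSymm) (hR : R.PosDef) :
    (∀ F : Matrix (Fin r) (Fin s) ℝ, (R - Fᵀ * F).PosSemidef →
        NegDef (Q + H * F * E + Eᵀ * Fᵀ * Hᵀ)) ↔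
    (∃ ε : ℝ, 0 < ε ∧
        NegDef (Q + ε ^ 2 • (H * Hᵀ) + (ε ^ 2)⁻¹ • (Eᵀ * R * E))) :=
  petersen_lemma_norm_bounded_general k r s Q hQ H E R hR
end
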